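/- If each X_i is a finite set with at least two points, then d⁰(V) = d⁰(V*): a set Y ⊆ ∏X_i is in the ideal generated by V-avoidance iff it is in the ideal generated by V*-avoidance. -/

import Mathlib

open Set Cardinal

/-- The set of branches of the trimmed tree `T[A,α]`:
all `β` agreeing with `α` outside of `A`. -/
def branches (X : ℕ → Type) (A : Set ℕ) (α : ∀ i, X i) : Set (∀ i, X i) :=
  {β | ∀ n ∉ A, β n = α n}

/-- The family `V` of branch sets of trimmed trees. -/
def treeV (X : ℕ → Type) : Set (Set (∀ i, X i)) :=
  {S | ∃ A α, A.Infinite ∧ S = branches X A α}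

/-- `[T]*`: all `β` agreeing with `α` outside of `A`, up to finitely many exceptions. -/
def starBranches (X : ℕ → Type) (A : Set ℕ) (α : ∀ i, X i) : Set (∀ i, X i) :=
  {β | {n | n ∉ A ∧ β n ≠ α n}.Finite}

/-- The family `V*`. -/
def treeVstar (X : ℕ → Type) : Set (Set (∀ i, X i)) :=
  {S | ∃ A α, A.Infinite ∧ S = starBranches X A α}

/-- The ideal `d⁰(F)`. -/
def d0 {X : ℕ → Type} (F : Set (Set (∀ i, X i))) : Set (Set (∀ i, X i)) :=
  {Y | ∀ W ∈ F, ∃ U ∈ F, U ⊆ W ∧ U ∩ Y = ∅}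

/-- `α_s`: overwrite `α` by `s` on `{0,…,n-1}`. -/
def modifySeq (X : ℕ → Type) (n : ℕ) (s α : ∀ i, X i) : ∀ i, X i :=
  fun i => if i < n then s i else α i

/-- `add(d⁰(V))`: the least cardinality of a subfamily of `d⁰(V)` whose union
is not in `d⁰(V)`. -/
noncomputable def addd0 (X : ℕ → Type) : Cardinal :=
  sInf {c | ∃ G : Set (Set (∀ i, X i)), G ⊆ d0 (treeV X) ∧ ⋃₀ G ∉ d0 (treeV X) ∧ c = #G}

/-!
A set `[B, γ]*` is the union of the sets `[B ∪ E, γ]` with `E` finite. To see that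
`Y ∈ d⁰(V)` also avoids `V*`, shrink a given tree by fusion in ω stages. At each stage let `F`
be the initial segment up to the least element of the current `B`; since only finitely many
patterns live on `F`, finitely many applications of `Y ∈ d⁰(V)`, one per pattern, give a
subtree `[B', γ']` with `B' ∩ F = ∅`, `γ'` frozen on `F`, and `[B' ∪ F, γ']` disjoint from `Y`.
The least elements of the stages form an infinite set `B`, the frozen values a limit `γ`, and
each `[B ∪ E, γ]` with `E` finite lies in one of the stage sets, so `[B, γ]*` avoids `Y`.
Conversely, `[B, γ]* ⊆ [A, α]*` forces `B \ A` to be finite, so the tree on `B ∩ A` that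
follows `γ` on `A` and `α` off `A` lies in `[A, α]` and in `[B, γ]*`.
-/

theorem exists_seq_of_forall_exists {α : Type*} {P : α → Prop} {R : α → α → Prop}
    (h : ∀ a, P a → ∃ b, P b ∧ R a b) {a : α} (ha : P a) :
    ∃ s : ℕ → α, s 0 = a ∧ ∀ k, P (s k) ∧ R (s k) (s (k + 1)) := by
  choose f hf using h
  let g : {a // P a} → {a // P a} := fun x => ⟨f x.1 x.2, (hf x.1 x.2).1⟩
  refine ⟨fun k => (g^[k] ⟨a, ha⟩).1, rfl, fun k => ⟨(g^[k] ⟨a, ha⟩).2, ?_⟩⟩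
  simp only [Function.iterate_succ_apply']
  exact (hf _ _).2

section Branches

variable {X : ℕ → Type} {A B : Set ℕ} {α β γ : ∀ i, X i}

theorem branches_mono (hAB : A ⊆ B) (h : ∀ n ∉ B, α n = β n) :
    branches X A α ⊆ branches X B β :=
  fun _ hx n hn => (hx n fun hA => hn (hAB hA)).trans (h n hn)

theorem branches_subset_branches_iff [∀ i, Nontrivial (X i)] :
    branches X A α ⊆ branches X B β ↔ A ⊆ B ∧ ∀ n ∉ B, α n = β n := by
  refine ⟨fun h => ⟨fun n hnA => ?_, fun n hn => h (fun _ _ => rfl) n hn⟩,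
    fun h => branches_mono h.1 h.2⟩
  by_contra hnB
  obtain ⟨v, hv⟩ := exists_ne (β n)
  have hmem : Function.update α n v ∈ branches X A α := fun m hm =>
    Function.update_of_ne (fun he : m = n => hm (he ▸ hnA)) _ _
  simpa [hv] using h hmem n hnB

theorem branches_finite [∀ i, Finite (X i)] (hA : A.Finite) (α : ∀ i, X i) :
    (branches X A α).Finite := by
  have : Finite A := hA.to_subtype
  refine Finite.of_finite_image (f := fun β (i : A) => β i) (toFinite _) ?_
  intro β₁ h₁ β₂ h₂ he
  funext n
  by_cases hn : n ∈ A
  · exact congrFun he ⟨n, hn⟩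
  · rw [h₁ n hn, h₂ n hn]

theorem branches_subset_starBranches : branches X A α ⊆ starBranches X A α :=
  fun _ h => finite_empty.subset fun n hn => hn.2 (h n hn.1)

theorem mem_starBranches_iff :
    β ∈ starBranches X A α ↔ ∃ E : Set ℕ, E.Finite ∧ β ∈ branches X (A ∪ E) α := by
  refine ⟨fun h => ⟨_, h, fun n hn => ?_⟩, fun ⟨E, hE, hβ⟩ => hE.subset fun n hn => ?_⟩
  · by_contra hne
    exact hn (Or.inr ⟨fun hA => hn (Or.inl hA), hne⟩)
  · by_contra hnE
    exact hn.2 (hβ n fun h => h.elim hn.1 hnE)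

theorem starBranches_mono (hAB : A ⊆ B) (h : ∀ n ∉ B, α n = β n) :
    starBranches X A α ⊆ starBranches X B β :=
  fun _ hx => hx.subset fun n hn => ⟨fun hA => hn.1 (hAB hA), fun he => hn.2 (he.trans (h n hn.1))⟩

theorem finite_of_starBranches_subset [∀ i, Nontrivial (X i)]
    (h : starBranches X B γ ⊆ starBranches X A α) :
    (B \ A).Finite ∧ {n | n ∉ A ∧ γ n ≠ α n}.Finite := by
  classical
  refine ⟨?_, h (branches_subset_starBranches fun _ _ => rfl)⟩
  choose c hc using fun n => exists_ne (α n)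
  have hβ : (B \ A).piecewise c γ ∈ starBranches X B γ :=
    branches_subset_starBranches fun n hn => piecewise_eq_of_notMem _ _ _ fun h => hn h.1
  refine (h hβ).subset fun n hn => ⟨hn.2, ?_⟩
  rw [piecewise_eq_of_mem _ _ _ hn]
  exact hc n

theorem exists_branches_subset_of_starBranches_subset [∀ i, Nontrivial (X i)] (hB : B.Infinite)
    (h : starBranches X B γ ⊆ starBranches X A α) :
    ∃ C δ, C.Infinite ∧ branches X C δ ⊆ branches X A α ∧
      branches X C δ ⊆ starBranches X B γ := by
  classical
  obtain ⟨hBA, hγα⟩ := finite_of_starBranches_subset h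
  refine ⟨B ∩ A, A.piecewise γ α, ?_,
    branches_mono inter_subset_right fun _ hn => piecewise_eq_of_notMem _ _ _ hn,
    fun β hβ => mem_starBranches_iff.2 ⟨_, hγα, branches_mono ?_ ?_ hβ⟩⟩
  · rw [← sdiff_sdiff_right_self]
    exact hB.sdiff hBA
  · exact inter_subset_left.trans subset_union_left
  · intro n hn
    by_cases hnA : n ∈ A
    · exact piecewise_eq_of_mem _ _ _ hnA
    · rw [piecewise_eq_of_notMem _ _ _ hnA]
      by_contra hne
      exact hn (Or.inr ⟨hnA, Ne.symm hne⟩)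

end Branches

section Refinement

variable {X : ℕ → Type} {Y : Set (∀ i, X i)} {B F : Set ℕ}

theorem exists_refinement_avoiding_pattern [∀ i, Nontrivial (X i)] (hY : Y ∈ d0 (treeV X))
    (hBF : (B \ F).Infinite) (γ s : ∀ i, X i) :
    ∃ B' γ', B' ⊆ B \ F ∧ B'.Infinite ∧ (∀ n ∈ F ∪ Bᶜ, γ' n = γ n) ∧
      ∀ β ∈ branches X (B' ∪ F) γ', (∀ n ∈ F, β n = s n) → β ∉ Y := by
  classical
  obtain ⟨_, ⟨B₁, γ₁, hB₁, rfl⟩, hsub, hdisj⟩ := hY _ ⟨_, F.piecewise s γ, hBF, rfl⟩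
  obtain ⟨hB₁F, hγ₁⟩ := branches_subset_branches_iff.1 hsub
  have hγ₁s : ∀ n ∈ F, γ₁ n = s n := fun n hn =>
    (hγ₁ n fun h => h.2 hn).trans (piecewise_eq_of_mem _ _ _ hn)
  refine ⟨B₁, F.piecewise γ γ₁, hB₁F, hB₁, fun n hn => ?_, fun β hβ hβs hβY => ?_⟩
  · by_cases hnF : n ∈ F
    · exact piecewise_eq_of_mem _ _ _ hnF
    · rw [piecewise_eq_of_notMem _ _ _ hnF, hγ₁ n fun h => hn.resolve_left hnF h.1,
        piecewise_eq_of_notMem _ _ _ hnF]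
  · refine eq_empty_iff_forall_notMem.1 hdisj β ⟨fun n hn => ?_, hβY⟩
    by_cases hnF : n ∈ F
    · rw [hβs n hnF, hγ₁s n hnF]
    · rw [hβ n fun h => h.elim hn hnF, piecewise_eq_of_notMem _ _ _ hnF]

theorem exists_refinement_avoiding_patterns [∀ i, Nontrivial (X i)] (hY : Y ∈ d0 (treeV X))
    (hF : F.Finite) {S : Set (∀ i, X i)} (hS : S.Finite) :
    ∀ {B : Set ℕ}, B.Infinite → ∀ γ : ∀ i, X i,
      ∃ B' γ', B' ⊆ B \ F ∧ B'.Infinite ∧ (∀ n ∈ F ∪ Bᶜ, γ' n = γ n) ∧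
        ∀ β ∈ branches X (B' ∪ F) γ', (∃ s ∈ S, ∀ n ∈ F, β n = s n) → β ∉ Y := by
  induction S, hS using Set.Finite.induction_on with
  | empty => exact fun hB γ => ⟨_, γ, subset_rfl, hB.sdiff hF, fun _ _ => rfl, by simp⟩
  | @insert s S _ _ ih =>
    intro B hB γ
    obtain ⟨B₁, γ₁, hB₁, hB₁inf, hγ₁, hS₁⟩ := ih hB γ
    obtain ⟨B₂, γ₂, hB₂, hB₂inf, hγ₂, hs₂⟩ :=
      exists_refinement_avoiding_pattern hY (hB₁inf.sdiff hF) γ₁ s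
    have hB₂B₁ : B₂ ⊆ B₁ := hB₂.trans sdiff_subset
    refine ⟨B₂, γ₂, hB₂B₁.trans hB₁, hB₂inf, fun n hn => ?_, ?_⟩
    · exact (hγ₂ n (hn.imp_right fun hnB h => hnB (hB₁ h).1)).trans (hγ₁ n hn)
    · rintro β hβ ⟨t, rfl | ht, hβt⟩
      · exact hs₂ β hβ hβt
      · refine hS₁ β (branches_mono (union_subset_union_left F hB₂B₁) (fun n hn => ?_) hβ)
          ⟨t, ht, hβt⟩
        exact hγ₂ n (Or.inr fun h => hn (Or.inl h))

theorem exists_refinement_disjoint [∀ i, Finite (X i)] [∀ i, Nontrivial (X i)]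
    (hY : Y ∈ d0 (treeV X)) (hF : F.Finite) (hB : B.Infinite) (γ : ∀ i, X i) :
    ∃ B' γ', B' ⊆ B \ F ∧ B'.Infinite ∧ (∀ n ∈ F ∪ Bᶜ, γ' n = γ n) ∧
      Disjoint (branches X (B' ∪ F) γ') Y := by
  classical
  obtain ⟨B', γ', hB', hB'inf, hγ', hY'⟩ :=
    exists_refinement_avoiding_patterns hY hF (branches_finite hF γ) hB γ
  refine ⟨B', γ', hB', hB'inf, hγ', disjoint_left.2 fun β hβ => hY' β hβ ?_⟩
  exact ⟨F.piecewise β γ, fun n hn => piecewise_eq_of_notMem _ _ _ hn,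
    fun n hn => (piecewise_eq_of_mem _ _ _ hn).symm⟩

end Refinement

structure FusionSeq (X : ℕ → Type) where
  B : ℕ → Set ℕ
  γ : ℕ → ∀ i, X i
  nonempty (k : ℕ) : (B k).Nonempty
  subset (k : ℕ) : B (k + 1) ⊆ B k \ Iic (sInf (B k))
  eq_of_mem (k : ℕ) : ∀ n ∈ Iic (sInf (B k)) ∪ (B k)ᶜ, γ (k + 1) n = γ k n

namespace FusionSeq

variable {X : ℕ → Type} (S : FusionSeq X)

noncomputable def b (k : ℕ) : ℕ := sInf (S.B k)

-- `S.γ j n` no longer changes once `n ≤ S.b j`, which holds from `j = n` on.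
def lim : ∀ i, X i := fun n => S.γ n n

theorem b_mem (k : ℕ) : S.b k ∈ S.B k := Nat.sInf_mem (S.nonempty k)

theorem antitone_B : Antitone S.B :=
  antitone_nat_of_succ_le fun k => (S.subset k).trans sdiff_subset

theorem strictMono_b : StrictMono S.b :=
  strictMono_nat_of_lt_succ fun k => not_le.1 (S.subset k (S.b_mem (k + 1))).2

theorem eq_of_le {k j : ℕ} (hkj : k ≤ j) : ∀ n ∈ Iic (S.b k) ∪ (S.B k)ᶜ, S.γ j n = S.γ k n := by
  induction j, hkj using Nat.le_induction with
  | base => exact fun _ _ => rfl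
  | succ j hkj ih =>
    intro n hn
    refine (S.eq_of_mem j n ?_).trans (ih n hn)
    exact union_subset_union (Iic_subset_Iic.2 (S.strictMono_b.monotone hkj))
      (compl_subset_compl.2 (S.antitone_B hkj)) hn

theorem lim_eq {k n : ℕ} (hn : n ∈ Iic (S.b k) ∪ (S.B k)ᶜ) : S.lim n = S.γ k n :=
  (S.eq_of_le (le_max_left n k) n (Or.inl (S.strictMono_b.id_le n))).symm.trans
    (S.eq_of_le (le_max_right n k) n hn)

theorem range_b_subset : range S.b ⊆ S.B 0 :=
  range_subset_iff.2 fun k => S.antitone_B (Nat.zero_le k) (S.b_mem k)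

theorem exists_branches_lim_subset {E : Set ℕ} (hE : E.Finite) :
    ∃ k, branches X (range S.b ∪ E) S.lim ⊆
      branches X (S.B (k + 1) ∪ Iic (S.b k)) (S.γ (k + 1)) := by
  obtain ⟨m, hm⟩ := hE.bddAbove
  refine ⟨m, branches_mono (union_subset ?_ ?_) fun n hn =>
    S.lim_eq (Or.inr fun h => hn (Or.inl h))⟩
  · rintro _ ⟨j, rfl⟩
    rcases le_or_gt j m with hj | hj
    · exact Or.inr (S.strictMono_b.monotone hj)
    · exact Or.inl (S.antitone_B hj (S.b_mem j))
  · exact fun n hn => Or.inr ((hm hn).trans (S.strictMono_b.id_le m))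

end FusionSeq

section Fusion

variable {X : ℕ → Type} [∀ i, Finite (X i)] [∀ i, Nontrivial (X i)] {Y : Set (∀ i, X i)}
  {A : Set ℕ}

theorem exists_fusionSeq (hY : Y ∈ d0 (treeV X)) (hA : A.Infinite) (α : ∀ i, X i) :
    ∃ S : FusionSeq X, S.B 0 = A ∧ S.γ 0 = α ∧
      ∀ k, Disjoint (branches X (S.B (k + 1) ∪ Iic (S.b k)) (S.γ (k + 1))) Y := by
  obtain ⟨s, hs0, hs⟩ := exists_seq_of_forall_exists
    (P := fun p : Set ℕ × (∀ i, X i) => p.1.Infinite)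
    (R := fun p q => q.1 ⊆ p.1 \ Iic (sInf p.1) ∧
      (∀ n ∈ Iic (sInf p.1) ∪ p.1ᶜ, q.2 n = p.2 n) ∧
      Disjoint (branches X (q.1 ∪ Iic (sInf p.1)) q.2) Y)
    (fun p hp => by
      obtain ⟨B', γ', hB', hB'inf, hγ', hdisj⟩ :=
        exists_refinement_disjoint hY (finite_Iic (sInf p.1)) hp p.2
      exact ⟨(B', γ'), hB'inf, hB', hγ', hdisj⟩)
    (a := (A, α)) hA
  refine ⟨⟨fun k => (s k).1, fun k => (s k).2, fun k => (hs k).1.nonempty, fun k => (hs k).2.1,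
    fun k => (hs k).2.2.1⟩, congrArg Prod.fst hs0, congrArg Prod.snd hs0, fun k => (hs k).2.2.2⟩

theorem exists_starBranches_disjoint (hY : Y ∈ d0 (treeV X)) (hA : A.Infinite) (α : ∀ i, X i) :
    ∃ B γ, B.Infinite ∧ B ⊆ A ∧ (∀ n ∉ A, γ n = α n) ∧ Disjoint (starBranches X B γ) Y := by
  obtain ⟨S, rfl, rfl, hS⟩ := exists_fusionSeq hY hA α
  refine ⟨range S.b, S.lim, infinite_range_of_injective S.strictMono_b.injective,
    S.range_b_subset, fun n hn => S.lim_eq (Or.inr hn), disjoint_left.2 fun β hβ => ?_⟩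
  obtain ⟨E, hE, hβE⟩ := mem_starBranches_iff.1 hβ
  obtain ⟨k, hk⟩ := S.exists_branches_lim_subset hE
  exact disjoint_left.1 (hS k) (hk hβE)

theorem d0_treeV_subset_d0_treeVstar : d0 (treeV X) ⊆ d0 (treeVstar X) := by
  rintro Y hY _ ⟨A, α, hA, rfl⟩
  obtain ⟨B, γ, hB, hBA, hγ, hdisj⟩ := exists_starBranches_disjoint hY hA α
  exact ⟨_, ⟨B, γ, hB, rfl⟩, starBranches_mono hBA hγ, disjoint_iff_inter_eq_empty.1 hdisj⟩

end Fusion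

theorem d0_treeVstar_subset_d0_treeV {X : ℕ → Type} [∀ i, Nontrivial (X i)] :
    d0 (treeVstar X) ⊆ d0 (treeV X) := by
  rintro Y hY _ ⟨A, α, hA, rfl⟩
  obtain ⟨_, ⟨B, γ, hB, rfl⟩, hsub, hdisj⟩ := hY _ ⟨A, α, hA, rfl⟩
  obtain ⟨C, δ, hC, hCA, hCB⟩ := exists_branches_subset_of_starBranches_subset hB hsub
  exact ⟨_, ⟨C, δ, hC, rfl⟩, hCA, subset_eq_empty (inter_subset_inter_left Y hCB) hdisj⟩

theorem stmt14 (X : ℕ → Type) [∀ i, Finite (X i)] [∀ i, Nontrivial (X i)] :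
    d0 (treeV X) = d0 (treeVstar X) :=
  d0_treeV_subset_d0_treeVstar.antisymm d0_treeVstar_subset_d0_treeV
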